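/- Let r_g ∈ ⋀²g and r_D ∈ ⋀²g_D be solutions of the modified classical Yang–Baxter equation for g and g_D respectively, such that r_g − r_D is invariant under g_D. Then: (i) ⟦r_g−r_D,·⟧ preserves (⋀g)^{g_D}; (ii) its restriction to (⋀g)^{g_D} coincides with that of ⟦r_g,·⟧ and squares to zero; (iii) ⟦r_g−r_D, r_g−r_D⟧ = ⟦r_g,r_g⟧ − ⟦r_D,r_D⟧. -/
import Mathlib


/-!
STATEMENT 2: The Schouten bracket endows ⋀g with the structure of a ℤ-graded Lie
algebra when ⋀^k g has degree k−1: graded antisymmetry and graded Jacobi hold for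
X ∈ ⋀^k g, Y ∈ ⋀^l g, Z ∈ ⋀g.

The Schouten bracket is encoded as a bilinear map `br` on the exterior algebra
satisfying the defining formula on decomposables:
⟦X₁∧…∧X_k, Y₁∧…∧Y_l⟧ = Σ_{i,j} (−1)^{i+j} [Xᵢ,Yⱼ] ∧ (X omit i) ∧ (Y omit j).
-/

open ExteriorAlgebra

noncomputable section

variable {K : Type*} [Field K] [CharZero K]
variable {g : Type*} [LieRing g] [LieAlgebra K g]

/-- X₁ ∧ … ∧ X_k in the exterior algebra. -/
def wdg {k : ℕ} (X : Fin k → g) : ExteriorAlgebra K g :=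
  ((List.ofFn X).map (ExteriorAlgebra.ι K)).prod

/-- X₁ ∧ … ∧ X̂ᵢ ∧ … ∧ X_k. -/
def wdgErase {k : ℕ} (X : Fin k → g) (i : Fin k) : ExteriorAlgebra K g :=
  (((List.ofFn X).eraseIdx i).map (ExteriorAlgebra.ι K)).prod

/-- `br` is the Schouten bracket: it is bilinear and satisfies the defining formula
on decomposables (indices in the sign are 0-based, matching the 1-based (−1)^{i+j}). -/
def IsSchoutenBracket
    (br : ExteriorAlgebra K g →ₗ[K] ExteriorAlgebra K g →ₗ[K] ExteriorAlgebra K g) : Prop :=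
  ∀ (k l : ℕ) (X : Fin k → g) (Y : Fin l → g),
    br (wdg X) (wdg Y) =
      ∑ i : Fin k, ∑ j : Fin l, ((-1 : K) ^ (i.val + j.val)) •
        (ExteriorAlgebra.ι K ⁅X i, Y j⁆ * wdgErase X i * wdgErase Y j)


/-- ⋀²g_D inside ⋀g: the span of products ι a * ι b with a, b ∈ g_D. -/
def wedge2Sub (D : LieSubalgebra K g) : Submodule K (ExteriorAlgebra K g) :=
  Submodule.span K
    {z | ∃ a ∈ D, ∃ b ∈ D, z = ExteriorAlgebra.ι K a * ExteriorAlgebra.ι K b}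

set_option linter.unusedSectionVars false
set_option linter.unusedVariables false

-- ## basic wdg lemmas

lemma wdg_zero (X : Fin 0 → g) : wdg (K := K) X = 1 := by simp [wdg]

lemma wdg_cons {k : ℕ} (z : g) (X : Fin k → g) :
    wdg (K := K) (Fin.cons z X) = ExteriorAlgebra.ι K z * wdg X := by
  simp [wdg, List.ofFn_succ]

lemma wdg_append {k l : ℕ} (X : Fin k → g) (Y : Fin l → g) :
    wdg (K := K) (Fin.append X Y) = wdg X * wdg Y := by
  simp [wdg, List.ofFn_fin_append]

lemma iota_anticomm (a b : g) :
    ExteriorAlgebra.ι K a * ExteriorAlgebra.ι K b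
      = -(ExteriorAlgebra.ι K b * ExteriorAlgebra.ι K a) := by
  have h := ExteriorAlgebra.ι_add_mul_swap (R := K) a b
  linear_combination (norm := noncomm_ring) h

lemma iota_mul_list (z : g) (L : List g) :
    ExteriorAlgebra.ι K z * (L.map (ExteriorAlgebra.ι K)).prod
      = ((-1 : K) ^ L.length) • ((L.map (ExteriorAlgebra.ι K)).prod * ExteriorAlgebra.ι K z) := by
  induction L with
  | nil => simp
  | cons a L ih =>
      simp only [List.map_cons, List.prod_cons, List.length_cons]
      rw [← mul_assoc, iota_anticomm (K := K) z a, neg_mul, mul_assoc, ih]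
      rw [mul_smul_comm, pow_succ, mul_comm ((-1:K)^L.length) (-1:K), mul_smul,
        neg_one_smul, mul_assoc]

lemma iota_mul_wdg {k : ℕ} (z : g) (X : Fin k → g) :
    ExteriorAlgebra.ι K z * wdg X = ((-1 : K) ^ k) • (wdg X * ExteriorAlgebra.ι K z) := by
  simpa [wdg] using iota_mul_list (K := K) z (List.ofFn X)

lemma ofFn_eraseIdx {k : ℕ} (X : Fin (k+1) → g) (i : Fin (k+1)) :
    (List.ofFn X).eraseIdx i = List.ofFn (X ∘ i.succAbove) := by
  apply List.ext_getElem
  · simp [List.length_eraseIdx, i.isLt]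
  · intro j h1 h2
    rw [List.getElem_eraseIdx]
    simp only [List.length_ofFn] at h2
    rcases lt_or_ge j i.val with h | h
    · rw [dif_pos h, List.getElem_ofFn, List.getElem_ofFn, Function.comp_apply,
        Fin.succAbove_of_castSucc_lt _ _ (by simpa [Fin.lt_def] using h)]
      rfl
    · rw [dif_neg (by omega), List.getElem_ofFn, List.getElem_ofFn, Function.comp_apply,
        Fin.succAbove_of_le_castSucc _ _ (by simp [Fin.le_def]; omega)]
      rfl

lemma wdgErase_eq {k : ℕ} (X : Fin (k+1) → g) (i : Fin (k+1)) :
    wdgErase (K := K) X i = wdg (X ∘ i.succAbove) := by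
  rw [wdgErase, ofFn_eraseIdx, wdg]

lemma wdgErase_cons_zero {k : ℕ} (z : g) (X : Fin k → g) :
    wdgErase (K := K) (Fin.cons z X) 0 = wdg X := by
  simp [wdgErase, wdg, List.ofFn_succ]

lemma wdgErase_cons_succ {k : ℕ} (z : g) (X : Fin k → g) (i : Fin k) :
    wdgErase (K := K) (Fin.cons z X) i.succ = ExteriorAlgebra.ι K z * wdgErase X i := by
  simp [wdgErase, List.ofFn_succ, List.eraseIdx_cons_succ]

-- ## spans

lemma wdg_one (x : g) : wdg (K := K) (fun _ : Fin 1 => x) = ExteriorAlgebra.ι K x := by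
  simp [wdg, List.ofFn_succ]

lemma wdgErase_one (x : g) (i : Fin 1) : wdgErase (K := K) (fun _ : Fin 1 => x) i = 1 := by
  have : i = 0 := Subsingleton.elim _ _
  subst this
  simp [wdgErase, List.ofFn_succ]

def wSp (P : Set g) (k : ℕ) : Submodule K (ExteriorAlgebra K g) :=
  Submodule.span K {z | ∃ X : Fin k → g, (∀ i, X i ∈ P) ∧ z = wdg X}

def wSpAll (P : Set g) : Submodule K (ExteriorAlgebra K g) :=
  Submodule.span K {z | ∃ (k : ℕ) (X : Fin k → g), (∀ i, X i ∈ P) ∧ z = wdg X}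

lemma wdg_mem_wSp {P : Set g} {k : ℕ} {X : Fin k → g} (h : ∀ i, X i ∈ P) :
    wdg (K := K) X ∈ wSp (K := K) P k :=
  Submodule.subset_span ⟨X, h, rfl⟩

lemma wdg_mem_wSpAll {P : Set g} {k : ℕ} {X : Fin k → g} (h : ∀ i, X i ∈ P) :
    wdg (K := K) X ∈ wSpAll (K := K) P :=
  Submodule.subset_span ⟨k, X, h, rfl⟩

lemma wSp_le_wSpAll (P : Set g) (k : ℕ) : wSp (K := K) P k ≤ wSpAll (K := K) P :=
  Submodule.span_mono (fun z ⟨X, h, hz⟩ => ⟨k, X, h, hz⟩)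

lemma mul_mem_wSpAll {P : Set g} {a b : ExteriorAlgebra K g}
    (ha : a ∈ wSpAll (K := K) P) (hb : b ∈ wSpAll (K := K) P) :
    a * b ∈ wSpAll (K := K) P := by
  induction ha using Submodule.span_induction with
  | mem x hx =>
      induction hb using Submodule.span_induction with
      | mem y hy =>
          obtain ⟨k, X, hX, rfl⟩ := hx
          obtain ⟨l, Y, hY, rfl⟩ := hy
          rw [← wdg_append]
          exact wdg_mem_wSpAll (fun i =>
            Fin.addCases (fun i => by rw [Fin.append_left]; exact hX i)
              (fun j => by rw [Fin.append_right]; exact hY j) i)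
      | zero => rw [mul_zero]; exact zero_mem _
      | add y z _ _ h1 h2 => rw [mul_add]; exact add_mem h1 h2
      | smul c y _ h1 => rw [mul_smul_comm]; exact Submodule.smul_mem _ _ h1
  | zero => rw [zero_mul]; exact zero_mem _
  | add x y _ _ h1 h2 => rw [add_mul]; exact add_mem h1 h2
  | smul c x _ h1 => rw [smul_mul_assoc]; exact Submodule.smul_mem _ _ h1

lemma mem_wSpAll_univ (x : ExteriorAlgebra K g) : x ∈ wSpAll (K := K) (Set.univ : Set g) := by
  induction x using ExteriorAlgebra.induction with
  | algebraMap r =>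
      rw [Algebra.algebraMap_eq_smul_one]
      exact Submodule.smul_mem _ _ (by
        have : (1 : ExteriorAlgebra K g) = wdg (K := K) (fun i : Fin 0 => i.elim0) :=
          (wdg_zero _).symm
        rw [this]; exact wdg_mem_wSpAll (fun i => trivial))
  | ι x =>
      rw [← wdg_one (K := K) x]
      exact wdg_mem_wSpAll (fun i => trivial)
  | mul a b ha hb => exact mul_mem_wSpAll ha hb
  | add a b ha hb => exact add_mem ha hb

/-- Extensionality over decomposables. -/
lemma wdg_ext {f h : ExteriorAlgebra K g →ₗ[K] ExteriorAlgebra K g}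
    (H : ∀ (k : ℕ) (X : Fin k → g), f (wdg X) = h (wdg X)) : ∀ x, f x = h x := by
  intro x
  refine LinearMap.eqOn_span ?_ (mem_wSpAll_univ x)
  rintro z ⟨k, X, -, rfl⟩
  exact H k X
-- ## bracket basics

variable {br : ExteriorAlgebra K g →ₗ[K] ExteriorAlgebra K g →ₗ[K] ExteriorAlgebra K g}

lemma br_one_left (hbr : IsSchoutenBracket br) (x : ExteriorAlgebra K g) : br 1 x = 0 := by
  have h := wdg_ext (f := br (wdg (fun i : Fin 0 => i.elim0)))
    (h := (0 : ExteriorAlgebra K g →ₗ[K] ExteriorAlgebra K g))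
    (fun l Y => by rw [hbr 0 l _ Y]; simp) x
  simpa [wdg_zero] using h

lemma br_one_right (hbr : IsSchoutenBracket br) (x : ExteriorAlgebra K g) : br x 1 = 0 := by
  have h := wdg_ext (f := br.flip 1)
    (h := (0 : ExteriorAlgebra K g →ₗ[K] ExteriorAlgebra K g))
    (fun k X => by
      have h2 := hbr k 0 X (fun i => i.elim0)
      rw [wdg_zero] at h2
      simpa using h2) x
  simpa using h

lemma br_iota (hbr : IsSchoutenBracket br) {l : ℕ} (y : g) (Y : Fin l → g) :
    br (ExteriorAlgebra.ι K y) (wdg Y)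
      = ∑ j : Fin l, ((-1 : K) ^ (j : ℕ)) • (ExteriorAlgebra.ι K ⁅y, Y j⁆ * wdgErase Y j) := by
  have h := hbr 1 l (fun _ => y) Y
  rw [wdg_one] at h
  rw [h, Fin.sum_univ_one]
  exact Finset.sum_congr rfl (fun j _ => by simp [wdgErase_one])

lemma br_iota_iota (hbr : IsSchoutenBracket br) (y z : g) :
    br (ExteriorAlgebra.ι K y) (ExteriorAlgebra.ι K z) = ExteriorAlgebra.ι K ⁅y, z⁆ := by
  rw [← wdg_one (K := K) z, br_iota hbr, Fin.sum_univ_one]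
  simp [wdgErase_one]

lemma list_mul_iota (z : g) (L : List g) :
    (L.map (ExteriorAlgebra.ι K)).prod * ExteriorAlgebra.ι K z
      = ((-1 : K) ^ L.length) • (ExteriorAlgebra.ι K z * (L.map (ExteriorAlgebra.ι K)).prod) := by
  rw [iota_mul_list, smul_smul, ← pow_add]
  rw [Even.neg_one_pow ⟨L.length, rfl⟩, one_smul]

lemma wdgErase_length {k : ℕ} (X : Fin k → g) (i : Fin k) :
    ((List.ofFn X).eraseIdx ↑i).length = k - 1 := by
  rw [List.length_eraseIdx]
  simp [i.isLt]

lemma wdgErase_mul_iota {k : ℕ} (z : g) (X : Fin k → g) (i : Fin k) :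
    wdgErase (K := K) X i * ExteriorAlgebra.ι K z
      = ((-1 : K) ^ (k - 1)) • (ExteriorAlgebra.ι K z * wdgErase X i) := by
  rw [wdgErase, list_mul_iota]
  congr 2
  exact wdgErase_length X i

/-- antisymmetry against a degree-one element -/
lemma br_wdg_iota (hbr : IsSchoutenBracket br) {k : ℕ} (X : Fin k → g) (d : g) :
    br (wdg X) (ExteriorAlgebra.ι K d) = -br (ExteriorAlgebra.ι K d) (wdg X) := by
  have h := hbr k 1 X (fun _ => d)
  rw [wdg_one] at h
  rw [h, br_iota hbr, ← Finset.sum_neg_distrib]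
  refine Finset.sum_congr rfl (fun i _ => ?_)
  rw [Fin.sum_univ_one]
  simp only [Fin.val_zero, add_zero, wdgErase_one, mul_one]
  rw [← lie_skew d (X i), map_neg, neg_mul, smul_neg, neg_neg]

lemma br_any_iota (hbr : IsSchoutenBracket br) (x : ExteriorAlgebra K g) (d : g) :
    br x (ExteriorAlgebra.ι K d) = -br (ExteriorAlgebra.ι K d) x := by
  have h := wdg_ext (f := br.flip (ExteriorAlgebra.ι K d))
    (h := -(br (ExteriorAlgebra.ι K d)))
    (fun k X => by simpa using br_wdg_iota hbr X d) x
  simpa using h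
-- ## Leibniz-type rules

lemma br_consL_wdg (hbr : IsSchoutenBracket br) {k l : ℕ} (z : g) (X : Fin k → g) (Y : Fin l → g) :
    br (ExteriorAlgebra.ι K z * wdg X) (wdg Y)
      = ExteriorAlgebra.ι K z * br (wdg X) (wdg Y)
        + ((-1 : K) ^ k) • (wdg X * br (ExteriorAlgebra.ι K z) (wdg Y)) := by
  rw [← wdg_cons, hbr (k+1) l (Fin.cons z X) Y, hbr k l X Y, br_iota hbr,
    Fin.sum_univ_succ, add_comm]
  congr 1
  · -- succ piece equals ι z * br (wdg X) (wdg Y)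
    rw [Finset.mul_sum]
    refine Finset.sum_congr rfl (fun i _ => ?_)
    rw [Finset.mul_sum]
    refine Finset.sum_congr rfl (fun j _ => ?_)
    simp only [Fin.cons_succ, wdgErase_cons_succ, Fin.val_succ, mul_assoc, mul_smul_comm]
    have hc : ExteriorAlgebra.ι K ⁅X i, Y j⁆
          * (ExteriorAlgebra.ι K z * (wdgErase X i * wdgErase Y j))
        = -(ExteriorAlgebra.ι K z
          * (ExteriorAlgebra.ι K ⁅X i, Y j⁆ * (wdgErase X i * wdgErase Y j))) := by
      rw [← mul_assoc, iota_anticomm, neg_mul, mul_assoc]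
    rw [hc, show (i : ℕ) + 1 + (j : ℕ) = ((i : ℕ) + (j : ℕ)) + 1 from by omega, pow_succ,
      mul_neg_one, neg_smul_neg]
  · -- zero piece equals (-1)^k • (wdg X * θ_z (wdg Y))
    rw [Finset.mul_sum, Finset.smul_sum]
    refine Finset.sum_congr rfl (fun j _ => ?_)
    simp only [Fin.cons_zero, wdgErase_cons_zero, Fin.val_zero, zero_add, mul_assoc,
      mul_smul_comm, smul_smul]
    have hc : ExteriorAlgebra.ι K ⁅z, Y j⁆ * (wdg X * wdgErase Y j)
        = ((-1 : K) ^ k) • (wdg (K := K) X * (ExteriorAlgebra.ι K ⁅z, Y j⁆ * wdgErase Y j)) := by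
      rw [← mul_assoc, iota_mul_wdg, smul_mul_assoc, mul_assoc]
    rw [hc, smul_smul]
    congr 1
    ring

lemma br_consL_wdg' (hbr : IsSchoutenBracket br) {k : ℕ} (z : g) (X : Fin k → g)
    (x : ExteriorAlgebra K g) :
    br (ExteriorAlgebra.ι K z * wdg X) x
      = ExteriorAlgebra.ι K z * br (wdg X) x
        + ((-1 : K) ^ k) • (wdg X * br (ExteriorAlgebra.ι K z) x) := by
  have h := wdg_ext (f := br (ExteriorAlgebra.ι K z * wdg X))
    (h := LinearMap.mulLeft K (ExteriorAlgebra.ι K z) ∘ₗ br (wdg X)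
      + ((-1 : K) ^ k) • (LinearMap.mulLeft K (wdg (K := K) X) ∘ₗ br (ExteriorAlgebra.ι K z)))
    (fun l Y => by simpa using br_consL_wdg hbr z X Y) x
  simpa using h

lemma br_consL (hbr : IsSchoutenBracket br) {k : ℕ} (z : g) {A : ExteriorAlgebra K g}
    (hA : A ∈ wSp (K := K) Set.univ k) (x : ExteriorAlgebra K g) :
    br (ExteriorAlgebra.ι K z * A) x
      = ExteriorAlgebra.ι K z * br A x
        + ((-1 : K) ^ k) • (A * br (ExteriorAlgebra.ι K z) x) := by
  have h := LinearMap.eqOn_span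
    (f := br.flip x ∘ₗ LinearMap.mulLeft K (ExteriorAlgebra.ι K z))
    (g := LinearMap.mulLeft K (ExteriorAlgebra.ι K z) ∘ₗ br.flip x
      + ((-1 : K) ^ k) • LinearMap.mulRight K (br (ExteriorAlgebra.ι K z) x))
    (fun A' hA' => by
      obtain ⟨X, -, rfl⟩ := hA'
      simpa using br_consL_wdg' hbr z X x) hA
  simpa using h

lemma br_consR_wdg (hbr : IsSchoutenBracket br) {k l : ℕ} (z : g) (X : Fin k → g) (Y : Fin l → g) :
    br (wdg X) (ExteriorAlgebra.ι K z * wdg Y)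
      = -(br (ExteriorAlgebra.ι K z) (wdg X) * wdg Y)
        + ((-1 : K) ^ (k + 1)) • (ExteriorAlgebra.ι K z * br (wdg X) (wdg Y)) := by
  cases k with
  | zero =>
      rw [wdg_zero X]
      simp [br_one_left hbr, br_one_right hbr]
  | succ k =>
      rw [← wdg_cons, hbr (k+1) (l+1) X (Fin.cons z Y), hbr (k+1) l X Y]
      simp only [Fin.sum_univ_succ (n := l)]
      rw [Finset.sum_add_distrib]
      congr 1
      · -- j = 0 piece equals -(θ_z (wdg X) * wdg Y)
        rw [br_iota hbr, Finset.sum_mul, ← Finset.sum_neg_distrib]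
        refine Finset.sum_congr rfl (fun i _ => ?_)
        simp only [Fin.cons_zero, wdgErase_cons_zero, Fin.val_zero, add_zero, smul_mul_assoc]
        rw [← lie_skew z (X i), map_neg, neg_mul, neg_mul, smul_neg, neg_neg]
      · -- succ piece
        rw [Finset.mul_sum, Finset.smul_sum]
        refine Finset.sum_congr rfl (fun i _ => ?_)
        rw [Finset.mul_sum, Finset.smul_sum]
        refine Finset.sum_congr rfl (fun j _ => ?_)
        simp only [Fin.cons_succ, wdgErase_cons_succ, Fin.val_succ, mul_assoc, mul_smul_comm,
          smul_smul]
        have hc : wdgErase (K := K) X i * (ExteriorAlgebra.ι K z * wdgErase Y j)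
            = ((-1 : K) ^ k) • (ExteriorAlgebra.ι K z * (wdgErase X i * wdgErase Y j)) := by
          rw [← mul_assoc, wdgErase_mul_iota, Nat.add_sub_cancel, smul_mul_assoc, mul_assoc]
        have hc2 : ExteriorAlgebra.ι K ⁅X i, Y j⁆
              * (ExteriorAlgebra.ι K z * (wdgErase X i * wdgErase Y j))
            = -(ExteriorAlgebra.ι K z
              * (ExteriorAlgebra.ι K ⁅X i, Y j⁆ * (wdgErase X i * wdgErase Y j))) := by
          rw [← mul_assoc, iota_anticomm, neg_mul, mul_assoc]
        rw [hc, mul_smul_comm, hc2, smul_smul, smul_neg, ← neg_smul]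
        congr 1
        ring

lemma br_consR_wdg' (hbr : IsSchoutenBracket br) {k : ℕ} (z : g) (X : Fin k → g)
    (x : ExteriorAlgebra K g) :
    br (wdg X) (ExteriorAlgebra.ι K z * x)
      = -(br (ExteriorAlgebra.ι K z) (wdg X) * x)
        + ((-1 : K) ^ (k + 1)) • (ExteriorAlgebra.ι K z * br (wdg X) x) := by
  have h := wdg_ext (f := br (wdg X) ∘ₗ LinearMap.mulLeft K (ExteriorAlgebra.ι K z))
    (h := -(LinearMap.mulLeft K (br (ExteriorAlgebra.ι K z) (wdg (K := K) X)))
      + ((-1 : K) ^ (k + 1)) • (LinearMap.mulLeft K (ExteriorAlgebra.ι K z) ∘ₗ br (wdg X)))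
    (fun l Y => by simpa using br_consR_wdg hbr z X Y) x
  simpa using h

lemma br_consR (hbr : IsSchoutenBracket br) {k : ℕ} (z : g) {A : ExteriorAlgebra K g}
    (hA : A ∈ wSp (K := K) Set.univ k) (x : ExteriorAlgebra K g) :
    br A (ExteriorAlgebra.ι K z * x)
      = -(br (ExteriorAlgebra.ι K z) A * x)
        + ((-1 : K) ^ (k + 1)) • (ExteriorAlgebra.ι K z * br A x) := by
  have h := LinearMap.eqOn_span
    (f := br.flip (ExteriorAlgebra.ι K z * x))
    (g := -(LinearMap.mulRight K x ∘ₗ br (ExteriorAlgebra.ι K z))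
      + ((-1 : K) ^ (k + 1)) • (LinearMap.mulLeft K (ExteriorAlgebra.ι K z) ∘ₗ br.flip x))
    (fun A' hA' => by
      obtain ⟨X, -, rfl⟩ := hA'
      simpa using br_consR_wdg' hbr z X x) hA
  simpa using h
-- ## theta calculus

lemma theta_iota_mul (hbr : IsSchoutenBracket br) (y z : g) (x : ExteriorAlgebra K g) :
    br (ExteriorAlgebra.ι K y) (ExteriorAlgebra.ι K z * x)
      = ExteriorAlgebra.ι K ⁅y, z⁆ * x
        + ExteriorAlgebra.ι K z * br (ExteriorAlgebra.ι K y) x := by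
  have h := br_consR_wdg' hbr (k := 1) z (fun _ => y) x
  rw [wdg_one] at h
  rw [h, br_iota_iota hbr, ← lie_skew y z, map_neg, neg_mul]
  norm_num

lemma theta_mul_wdg (hbr : IsSchoutenBracket br) (y : g) :
    ∀ {k : ℕ} (X : Fin k → g) (w : ExteriorAlgebra K g),
      br (ExteriorAlgebra.ι K y) (wdg X * w)
        = br (ExteriorAlgebra.ι K y) (wdg X) * w + wdg X * br (ExteriorAlgebra.ι K y) w := by
  intro k
  induction k with
  | zero =>
      intro X w
      rw [wdg_zero]
      simp [br_one_right hbr]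
  | succ k ih =>
      intro X w
      rw [← Fin.cons_self_tail X, wdg_cons]
      simp only [mul_assoc]
      simp only [theta_iota_mul hbr, ih]
      simp only [mul_add, add_mul, mul_assoc]
      abel

lemma theta_mem_wSp (hbr : IsSchoutenBracket br) (y : g) {k : ℕ} {A : ExteriorAlgebra K g}
    (hA : A ∈ wSp (K := K) Set.univ k) :
    br (ExteriorAlgebra.ι K y) A ∈ wSp (K := K) Set.univ k := by
  induction hA using Submodule.span_induction with
  | mem a ha =>
      obtain ⟨X, -, rfl⟩ := ha
      cases k with
      | zero =>
          rw [wdg_zero, br_one_right hbr]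
          exact zero_mem _
      | succ k =>
          rw [br_iota hbr]
          refine Submodule.sum_mem _ (fun j _ => Submodule.smul_mem _ _ ?_)
          rw [wdgErase_eq, ← wdg_cons]
          exact wdg_mem_wSp (fun i => trivial)
  | zero => rw [map_zero]; exact zero_mem _
  | add a b _ _ h1 h2 => rw [map_add]; exact add_mem h1 h2
  | smul c a _ h1 => rw [map_smul]; exact Submodule.smul_mem _ _ h1

lemma theta_comm_wdg (hbr : IsSchoutenBracket br) (y z : g) :
    ∀ {k : ℕ} (X : Fin k → g),
      br (ExteriorAlgebra.ι K y) (br (ExteriorAlgebra.ι K z) (wdg X))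
        = br (ExteriorAlgebra.ι K ⁅y, z⁆) (wdg X)
          + br (ExteriorAlgebra.ι K z) (br (ExteriorAlgebra.ι K y) (wdg X)) := by
  intro k
  induction k with
  | zero =>
      intro X
      rw [wdg_zero]
      simp [br_one_right hbr]
  | succ k ih =>
      intro X
      rw [← Fin.cons_self_tail X, wdg_cons]
      simp only [theta_iota_mul hbr, map_add, mul_add]
      rw [ih]
      simp only [theta_iota_mul hbr, map_add, mul_add]
      rw [leibniz_lie y z (X 0), map_add, add_mul]
      abel

lemma theta_comm (hbr : IsSchoutenBracket br) (y z : g) (x : ExteriorAlgebra K g) :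
    br (ExteriorAlgebra.ι K y) (br (ExteriorAlgebra.ι K z) x)
      = br (ExteriorAlgebra.ι K ⁅y, z⁆) x
        + br (ExteriorAlgebra.ι K z) (br (ExteriorAlgebra.ι K y) x) := by
  have h := wdg_ext (f := br (ExteriorAlgebra.ι K y) ∘ₗ br (ExteriorAlgebra.ι K z))
    (h := br (ExteriorAlgebra.ι K ⁅y, z⁆)
      + br (ExteriorAlgebra.ι K z) ∘ₗ br (ExteriorAlgebra.ι K y))
    (fun k X => by simpa using theta_comm_wdg hbr y z X) x
  simpa using h

lemma jac1_wdg (hbr : IsSchoutenBracket br) (y : g) :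
    ∀ {k : ℕ} (X : Fin k → g) (x : ExteriorAlgebra K g),
      br (ExteriorAlgebra.ι K y) (br (wdg X) x)
        = br (br (ExteriorAlgebra.ι K y) (wdg X)) x
          + br (wdg X) (br (ExteriorAlgebra.ι K y) x) := by
  intro k
  induction k with
  | zero =>
      intro X x
      rw [wdg_zero]
      simp [br_one_left hbr, br_one_right hbr]
  | succ k ih =>
      intro X x
      have hTmem : wdg (K := K) (Fin.tail X) ∈ wSp (K := K) Set.univ k :=
        wdg_mem_wSp (fun _ => trivial)
      rw [← Fin.cons_self_tail X, wdg_cons]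
      rw [br_consL hbr (X 0) hTmem x, map_add, map_smul,
        theta_iota_mul hbr y (X 0) (br (wdg (Fin.tail X)) x),
        theta_mul_wdg hbr, ih, theta_comm hbr]
      rw [theta_iota_mul hbr y (X 0) (wdg (Fin.tail X)), map_add, LinearMap.add_apply,
        br_consL hbr ⁅y, X 0⁆ hTmem x,
        br_consL hbr (X 0) (theta_mem_wSp hbr y hTmem) x,
        br_consL hbr (X 0) hTmem (br (ExteriorAlgebra.ι K y) x)]
      simp only [mul_add, smul_add]
      abel

lemma jac1 (hbr : IsSchoutenBracket br) (y : g) (A x : ExteriorAlgebra K g) :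
    br (ExteriorAlgebra.ι K y) (br A x)
      = br (br (ExteriorAlgebra.ι K y) A) x + br A (br (ExteriorAlgebra.ι K y) x) := by
  have h := wdg_ext (f := br (ExteriorAlgebra.ι K y) ∘ₗ br.flip x)
    (h := br.flip x ∘ₗ br (ExteriorAlgebra.ι K y) + br.flip (br (ExteriorAlgebra.ι K y) x))
    (fun k X => by simpa using jac1_wdg hbr y X x) A
  simpa using h
-- ## symmetry in degree 2, bracket membership, invariance lemmas

lemma wdgErase_two_zero (X : Fin 2 → g) :
    wdgErase (K := K) X 0 = ExteriorAlgebra.ι K (X 1) := by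
  simp [wdgErase, List.ofFn_succ, Fin.succ_zero_eq_one]

lemma wdgErase_two_one (X : Fin 2 → g) :
    wdgErase (K := K) X 1 = ExteriorAlgebra.ι K (X 0) := by
  simp [wdgErase, List.ofFn_succ]

lemma fin2_eq (i : Fin 2) : i = 0 ∨ i = 1 := by
  rcases i with ⟨v, hv⟩
  interval_cases v
  · exact Or.inl (Fin.ext rfl)
  · exact Or.inr (Fin.ext rfl)

lemma wdg_pair (X : Fin 2 → g) :
    wdg (K := K) X = ExteriorAlgebra.ι K (X 0) * ExteriorAlgebra.ι K (X 1) := by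
  simp [wdg, List.ofFn_succ, Fin.succ_zero_eq_one]

lemma wdgErase_two_swap (X Y : Fin 2 → g) (i j : Fin 2) :
    wdgErase (K := K) Y j * wdgErase X i = -(wdgErase X i * wdgErase Y j) := by
  rcases fin2_eq i with rfl | rfl <;> rcases fin2_eq j with rfl | rfl <;>
    simp only [wdgErase_two_zero, wdgErase_two_one] <;> rw [iota_anticomm]

lemma br_sym22_wdg (hbr : IsSchoutenBracket br) (X Y : Fin 2 → g) :
    br (wdg X) (wdg Y) = br (wdg Y) (wdg X) := by
  rw [hbr 2 2 X Y, hbr 2 2 Y X]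
  conv_rhs => rw [Finset.sum_comm]
  refine Finset.sum_congr rfl fun i _ => Finset.sum_congr rfl fun j _ => ?_
  rw [← lie_skew (Y j) (X i), map_neg, neg_mul, neg_mul, smul_neg, mul_assoc,
    mul_assoc (ExteriorAlgebra.ι K ⁅X i, Y j⁆) (wdgErase Y j) (wdgErase X i),
    wdgErase_two_swap X Y i j, mul_neg, smul_neg, neg_neg]
  congr 1
  ring

lemma br_sym22 (hbr : IsSchoutenBracket br) {A B : ExteriorAlgebra K g}
    (hA : A ∈ wSp (K := K) Set.univ 2) (hB : B ∈ wSp (K := K) Set.univ 2) :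
    br A B = br B A := by
  have step1 : ∀ (X : Fin 2 → g), br (wdg X) B = br B (wdg X) := fun X =>
    LinearMap.eqOn_span (f := br (wdg X)) (g := br.flip (wdg X))
      (fun z hz => by obtain ⟨Y, -, rfl⟩ := hz; simpa using br_sym22_wdg hbr X Y) hB
  have h := LinearMap.eqOn_span (f := br.flip B) (g := br B)
    (fun z hz => by obtain ⟨X, -, rfl⟩ := hz; simpa using step1 X) hA
  simpa using h

lemma wdg_three (a b c : g) :
    wdg (K := K) (Fin.cons a (Fin.cons b (fun _ : Fin 1 => c)))
      = ExteriorAlgebra.ι K a * (ExteriorAlgebra.ι K b * ExteriorAlgebra.ι K c) := by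
  rw [wdg_cons, wdg_cons, wdg_one]

lemma br22_mem (hbr : IsSchoutenBracket br) {P : Set g}
    (hP : ∀ a ∈ P, ∀ b ∈ P, ⁅a, b⁆ ∈ P) {A B : ExteriorAlgebra K g}
    (hA : A ∈ wSp (K := K) P 2) (hB : B ∈ wSp (K := K) P 2) :
    br A B ∈ wSp (K := K) P 3 := by
  induction hA using Submodule.span_induction with
  | mem a ha =>
      induction hB using Submodule.span_induction with
      | mem b hb =>
          obtain ⟨X, hX, rfl⟩ := ha
          obtain ⟨Y, hY, rfl⟩ := hb
          rw [hbr 2 2 X Y]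
          refine Submodule.sum_mem _ fun i _ => Submodule.sum_mem _ fun j _ =>
            Submodule.smul_mem _ _ ?_
          have hmem : ∀ (u v w : g), u ∈ P → v ∈ P → w ∈ P →
              ExteriorAlgebra.ι K u * (ExteriorAlgebra.ι K v * ExteriorAlgebra.ι K w)
                ∈ wSp (K := K) P 3 := by
            intro u v w hu hv hw
            rw [← wdg_three]
            exact wdg_mem_wSp (fun i => i.cases hu (fun i' => i'.cases hv (fun _ => hw)))
          rcases fin2_eq i with rfl | rfl <;> rcases fin2_eq j with rfl | rfl <;>
            · simp only [wdgErase_two_zero, wdgErase_two_one, mul_assoc]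
              exact hmem _ _ _ (hP _ (hX _) _ (hY _)) (hX _) (hY _)
      | zero => rw [map_zero]; exact zero_mem _
      | add b c _ _ h1 h2 => rw [map_add]; exact add_mem h1 h2
      | smul t b _ h1 => rw [map_smul]; exact Submodule.smul_mem _ _ h1
  | zero => rw [map_zero, LinearMap.zero_apply]; exact zero_mem _
  | add a c _ _ h1 h2 => rw [map_add, LinearMap.add_apply]; exact add_mem h1 h2
  | smul t a _ h1 => rw [map_smul, LinearMap.smul_apply]; exact Submodule.smul_mem _ _ h1

/-- if x is P-invariant then everything built from P kills it -/
lemma brP_inv (hbr : IsSchoutenBracket br) {P : Set g} {x : ExteriorAlgebra K g}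
    (hx : ∀ a ∈ P, br (ExteriorAlgebra.ι K a) x = 0) {w : ExteriorAlgebra K g}
    (hw : w ∈ wSpAll (K := K) P) : br w x = 0 := by
  have H : ∀ (k : ℕ) (X : Fin k → g), (∀ i, X i ∈ P) → br (wdg X) x = 0 := by
    intro k
    induction k with
    | zero => intro X _; rw [wdg_zero]; exact br_one_left hbr x
    | succ k ih =>
        intro X hX
        rw [← Fin.cons_self_tail X, wdg_cons,
          br_consL hbr (X 0) (wdg_mem_wSp (fun _ => trivial)) x,
          ih (Fin.tail X) (fun i => hX i.succ), hx (X 0) (hX 0)]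
        simp
  induction hw using Submodule.span_induction with
  | mem a ha => obtain ⟨k, X, hX, rfl⟩ := ha; exact H k X hX
  | zero => rw [map_zero, LinearMap.zero_apply]
  | add a c _ _ h1 h2 => rw [map_add, LinearMap.add_apply, h1, h2, add_zero]
  | smul t a _ h1 => rw [map_smul, LinearMap.smul_apply, h1, smul_zero]

/-- a g-invariant element brackets to zero with everything -/
lemma br_ginv (hbr : IsSchoutenBracket br) {k : ℕ} {w : ExteriorAlgebra K g}
    (hw : w ∈ wSp (K := K) Set.univ k)
    (hiv : ∀ y : g, br (ExteriorAlgebra.ι K y) w = 0) (x : ExteriorAlgebra K g) :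
    br w x = 0 := by
  have H : ∀ (l : ℕ) (Y : Fin l → g), br w (wdg Y) = 0 := by
    intro l
    induction l with
    | zero => intro Y; rw [wdg_zero]; exact br_one_right hbr w
    | succ l ih =>
        intro Y
        rw [← Fin.cons_self_tail Y, wdg_cons, br_consR hbr (Y 0) hw, hiv (Y 0),
          ih (Fin.tail Y)]
        simp
  have h := wdg_ext (f := br w) (h := 0) (fun l Y => by simpa using H l Y) x
  simpa using h

-- ## degree-2 Jacobi

lemma br_ii (hbr : IsSchoutenBracket br) (a b : g) (Z : ExteriorAlgebra K g) :
    br (ExteriorAlgebra.ι K a * ExteriorAlgebra.ι K b) Z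
      = ExteriorAlgebra.ι K a * br (ExteriorAlgebra.ι K b) Z
        - ExteriorAlgebra.ι K b * br (ExteriorAlgebra.ι K a) Z := by
  have h1 : (ExteriorAlgebra.ι K b : ExteriorAlgebra K g) = wdg (fun _ : Fin 1 => b) :=
    (wdg_one b).symm
  rw [h1, br_consL hbr a (wdg_mem_wSp (fun _ => trivial)) Z, ← h1]
  simp [sub_eq_add_neg]

lemma iotas_mem_wSp2 {P : Set g} {a b : g} (ha : a ∈ P) (hb : b ∈ P) :
    ExteriorAlgebra.ι K a * ExteriorAlgebra.ι K b ∈ wSp (K := K) P 2 := by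
  have h : ExteriorAlgebra.ι K a * ExteriorAlgebra.ι K b
      = wdg (K := K) (Fin.cons a (fun _ : Fin 1 => b)) := by rw [wdg_cons, wdg_one]
  rw [h]
  exact wdg_mem_wSp (fun i => i.cases ha (fun _ => hb))

lemma jac2_pre (hbr : IsSchoutenBracket br) (a b : g) {B : ExteriorAlgebra K g}
    (hB : B ∈ wSp (K := K) Set.univ 2) (C : ExteriorAlgebra K g) :
    br (ExteriorAlgebra.ι K a * ExteriorAlgebra.ι K b) (br B C)
      = br (br (ExteriorAlgebra.ι K a * ExteriorAlgebra.ι K b) B) C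
        - br B (br (ExteriorAlgebra.ι K a * ExteriorAlgebra.ι K b) C) := by
  have h3 : ((-1 : K) ^ (2 + 1)) = -1 := by norm_num
  rw [br_ii hbr a b (br B C), jac1 hbr b B C, jac1 hbr a B C,
    br_ii hbr a b B, br_ii hbr a b C]
  rw [map_sub, LinearMap.sub_apply, map_sub,
    br_consL hbr a (theta_mem_wSp hbr b hB) C,
    br_consL hbr b (theta_mem_wSp hbr a hB) C,
    br_consR hbr a hB (br (ExteriorAlgebra.ι K b) C),
    br_consR hbr b hB (br (ExteriorAlgebra.ι K a) C), h3]
  simp only [neg_one_sq, one_smul, neg_smul, one_smul, mul_add, mul_sub, smul_add, smul_sub]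
  abel

lemma jac2 (hbr : IsSchoutenBracket br) {A B : ExteriorAlgebra K g}
    (hA : A ∈ wSp (K := K) Set.univ 2) (hB : B ∈ wSp (K := K) Set.univ 2)
    (C : ExteriorAlgebra K g) :
    br A (br B C) = br (br A B) C - br B (br A C) := by
  have h := LinearMap.eqOn_span (f := br.flip (br B C))
    (g := br.flip C ∘ₗ br.flip B - br B ∘ₗ br.flip C)
    (fun z hz => by
      obtain ⟨X, -, rfl⟩ := hz
      rw [wdg_pair X]
      simpa using jac2_pre hbr (X 0) (X 1) hB C) hA
  simpa using h
lemma wedge2Sub_le (D : LieSubalgebra K g) :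
    wedge2Sub (K := K) D ≤ wSp (K := K) (↑D : Set g) 2 := by
  rw [wedge2Sub, Submodule.span_le]
  rintro z ⟨a, ha, b, hb, rfl⟩
  exact iotas_mem_wSp2 ha hb

lemma mem_wSp2_univ {x : ExteriorAlgebra K g} (hx : x ∈ ⋀[K]^2 g) :
    x ∈ wSp (K := K) (Set.univ : Set g) 2 := by
  have hx2 : x ∈ LinearMap.range (ExteriorAlgebra.ι K : g →ₗ[K] ExteriorAlgebra K g)
      * LinearMap.range (ExteriorAlgebra.ι K : g →ₗ[K] ExteriorAlgebra K g) := by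
    rw [← pow_two]
    exact hx
  refine Submodule.mul_induction_on hx2 ?_ ?_
  · rintro m ⟨a, rfl⟩ n ⟨b, rfl⟩
    exact iotas_mem_wSp2 trivial trivial
  · intro x y h1 h2
    exact add_mem h1 h2


/-!
STATEMENT 6: Let r_g ∈ ⋀²g and r_D ∈ ⋀²g_D solve the MCYBE for g and g_D
respectively (⟦r,r⟧ invariant), with r_g − r_D invariant under g_D.  Then
(i) ⟦r_g−r_D,·⟧ preserves (⋀g)^{g_D};
(ii) on (⋀g)^{g_D} it coincides with ⟦r_g,·⟧ and squares to zero;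
(iii) ⟦r_g−r_D, r_g−r_D⟧ = ⟦r_g,r_g⟧ − ⟦r_D,r_D⟧.
Invariance under y ∈ g is expressed by ⟦ι y, ·⟧ = 0 (adjoint action).
-/
theorem stmt6
    (br : ExteriorAlgebra K g →ₗ[K] ExteriorAlgebra K g →ₗ[K] ExteriorAlgebra K g)
    (hbr : IsSchoutenBracket br)
    (D : LieSubalgebra K g)
    (rg rD : ExteriorAlgebra K g)
    (hrg : rg ∈ ⋀[K]^2 g) (hrD2 : rD ∈ ⋀[K]^2 g) (hrDD : rD ∈ wedge2Sub D)
    (hmg : ∀ y : g, br (ExteriorAlgebra.ι K y) (br rg rg) = 0)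
    (hmD : ∀ d ∈ D, br (ExteriorAlgebra.ι K d) (br rD rD) = 0)
    (hinv : ∀ d ∈ D, br (ExteriorAlgebra.ι K d) (rg - rD) = 0) :
    (∀ x : ExteriorAlgebra K g, (∀ d ∈ D, br (ExteriorAlgebra.ι K d) x = 0) →
      ∀ d ∈ D, br (ExteriorAlgebra.ι K d) (br (rg - rD) x) = 0) ∧
    (∀ x : ExteriorAlgebra K g, (∀ d ∈ D, br (ExteriorAlgebra.ι K d) x = 0) →
      br (rg - rD) x = br rg x ∧ br (rg - rD) (br (rg - rD) x) = 0) ∧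
    br (rg - rD) (rg - rD) = br rg rg - br rD rD := by
  have hrgU : rg ∈ wSp (K := K) (Set.univ : Set g) 2 := mem_wSp2_univ hrg
  have hrDU : rD ∈ wSp (K := K) (Set.univ : Set g) 2 := mem_wSp2_univ hrD2
  have hsU : rg - rD ∈ wSp (K := K) (Set.univ : Set g) 2 := sub_mem hrgU hrDU
  have hrDD2 : rD ∈ wSp (K := K) (↑D : Set g) 2 := wedge2Sub_le D hrDD
  have hrDall : rD ∈ wSpAll (K := K) (↑D : Set g) := wSp_le_wSpAll _ _ hrDD2
  -- rD (and anything built from D) kills D-invariants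
  have hkill : ∀ x : ExteriorAlgebra K g, (∀ d ∈ D, br (ExteriorAlgebra.ι K d) x = 0) →
      ∀ w ∈ wSpAll (K := K) (↑D : Set g), br w x = 0 := by
    intro x hx w hw
    exact brP_inv hbr (fun a ha => hx a ha) hw
  -- part (iii)
  have hbrDs : br rD (rg - rD) = 0 :=
    brP_inv hbr (fun a ha => hinv a ha) hrDall
  have hbsrD : br (rg - rD) rD = 0 := by
    rw [br_sym22 hbr hsU hrDU]
    exact hbrDs
  have h1 : br rD rg = br rD rD := by
    have h := hbrDs
    rw [map_sub] at h
    exact sub_eq_zero.mp h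
  have h2 : br rg rD = br rD rD := by
    have h := hbsrD
    rw [map_sub, LinearMap.sub_apply] at h
    exact sub_eq_zero.mp h
  have hiii : br (rg - rD) (rg - rD) = br rg rg - br rD rD := by
    rw [map_sub br rg rD, LinearMap.sub_apply, map_sub, map_sub, h1, h2]
    abel
  refine ⟨?_, ?_, hiii⟩
  · -- part (i)
    intro x hx d hd
    rw [jac1 hbr d (rg - rD) x, hinv d hd, hx d hd]
    simp [br_one_left hbr]
  · -- part (ii)
    intro x hx
    constructor
    · rw [map_sub, LinearMap.sub_apply, hkill x hx rD hrDall, sub_zero]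
    · have hJ := jac2 hbr hsU hsU x
      have hz : br (br (rg - rD) (rg - rD)) x = 0 := by
        rw [hiii, map_sub, LinearMap.sub_apply]
        have hg : br (br rg rg) x = 0 := by
          refine br_ginv hbr (k := 3) ?_ hmg x
          exact br22_mem hbr (fun _ _ _ _ => Set.mem_univ _) hrgU hrgU
        have hd : br (br rD rD) x = 0 :=
          hkill x hx _ (wSp_le_wSpAll _ 3
            (br22_mem hbr (fun a ha b hb => D.lie_mem ha hb) hrDD2 hrDD2))
        rw [hg, hd, sub_zero]
      rw [hz, zero_sub] at hJ
      have h4 : br (rg - rD) (br (rg - rD) x) + br (rg - rD) (br (rg - rD) x) = 0 := by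
        nth_rewrite 1 [hJ]
        exact neg_add_cancel _
      rw [← two_smul K] at h4
      exact (smul_eq_zero.mp h4).resolve_left two_ne_zero

end
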